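/- Let E, F be finite-dimensional complex normed vector spaces and A : E → F a linear map. (a) If (λ_n) is a sequence in ℂ with |λ_n| → ∞ and (e_n) a sequence in E such that (e_n, λ_n A e_n) → (e, f) in E × F, then e ∈ ker A and f ∈ range A; in particular (e, f) ∈ ker A × range A. (b) Conversely, for every e ∈ ker A, f ∈ range A, and every sequence λ_n with |λ_n| → ∞ and λ_n ≠ 0, there exist e_n ∈ E with (e_n, λ_n A e_n) → (e, f). -/
import Mathlib


open Filter

/-- (a) If `|λ_n| → ∞` and `(e_n, λ_n A e_n) → (e, f)`, then `e ∈ ker A`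
and `f ∈ range A`. (b) Conversely, for every `e ∈ ker A`, `f ∈ range A` and every
sequence `λ_n ≠ 0` with `|λ_n| → ∞`, there exist `e_n` with
`(e_n, λ_n A e_n) → (e, f)`. -/
theorem stmt18 {E F : Type*}
    [NormedAddCommGroup E] [NormedSpace ℂ E] [FiniteDimensional ℂ E]
    [NormedAddCommGroup F] [NormedSpace ℂ F] [FiniteDimensional ℂ F]
    (A : E →ₗ[ℂ] F) :
    (∀ (lam : ℕ → ℂ) (e : ℕ → E) (x : E) (y : F),
      Tendsto (fun n => ‖lam n‖) atTop atTop →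
      Tendsto (fun n => ((e n, lam n • A (e n)) : E × F)) atTop (nhds (x, y)) →
      x ∈ LinearMap.ker A ∧ y ∈ LinearMap.range A) ∧
    (∀ x ∈ LinearMap.ker A, ∀ y ∈ LinearMap.range A,
      ∀ lam : ℕ → ℂ, Tendsto (fun n => ‖lam n‖) atTop atTop → (∀ n, lam n ≠ 0) →
      ∃ e : ℕ → E,
        Tendsto (fun n => ((e n, lam n • A (e n)) : E × F)) atTop (nhds (x, y))) := by
  have hAc : Continuous A := A.continuous_of_finiteDimensional
  constructor
  · intro lam e x y hlam htend
    have he : Tendsto e atTop (nhds x) := (continuous_fst.tendsto _).comp htend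
    have hf : Tendsto (fun n => lam n • A (e n)) atTop (nhds y) :=
      (continuous_snd.tendsto _).comp htend
    -- 1/λ_n → 0
    have hinv : Tendsto (fun n => (lam n)⁻¹) atTop (nhds (0 : ℂ)) := by
      rw [tendsto_zero_iff_norm_tendsto_zero]
      simp only [norm_inv]
      exact hlam.inv_tendsto_atTop
    -- A e_n → A x, and also (1/λ_n) • (λ_n • A e_n) → 0 • y = 0
    have hAe : Tendsto (fun n => A (e n)) atTop (nhds (A x)) :=
      (hAc.tendsto x).comp he
    have h2 : Tendsto (fun n => (lam n)⁻¹ • (lam n • A (e n))) atTop (nhds ((0:ℂ) • y)) :=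
      hinv.smul hf
    rw [zero_smul] at h2
    -- eventually λ_n ≠ 0
    have hne : ∀ᶠ n in atTop, lam n ≠ 0 := by
      filter_upwards [hlam.eventually_gt_atTop 0] with n hn
      intro h; rw [h] at hn; simp at hn
    have h3 : Tendsto (fun n => A (e n)) atTop (nhds 0) := by
      apply h2.congr'
      filter_upwards [hne] with n hn
      rw [smul_smul, inv_mul_cancel₀ hn, one_smul]
    have hker : A x = 0 := tendsto_nhds_unique hAe h3
    refine ⟨hker, ?_⟩
    have hclosed : IsClosed (LinearMap.range A : Set F) :=
      (LinearMap.range A).closed_of_finiteDimensional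
    have hy : y ∈ (LinearMap.range A : Set F) := by
      apply hclosed.mem_of_tendsto hf
      filter_upwards with n
      exact ⟨lam n • e n, by simp [map_smul]⟩
    exact hy
  · rintro x hx y ⟨u, rfl⟩ lam hlam hne
    refine ⟨fun n => x + (lam n)⁻¹ • u, ?_⟩
    have hinv : Tendsto (fun n => (lam n)⁻¹) atTop (nhds (0 : ℂ)) := by
      rw [tendsto_zero_iff_norm_tendsto_zero]
      simp only [norm_inv]
      exact hlam.inv_tendsto_atTop
    have h1 : Tendsto (fun n => x + (lam n)⁻¹ • u) atTop (nhds x) := by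
      have := (hinv.smul_const u)
      rw [zero_smul] at this
      simpa using tendsto_const_nhds.add this
    have h2 : ∀ n, lam n • A (x + (lam n)⁻¹ • u) = A u := by
      intro n
      have hx0 : A x = 0 := hx
      simp [map_add, map_smul, hx0, smul_smul, mul_inv_cancel₀ (hne n)]
    rw [nhds_prod_eq]
    apply Tendsto.prodMk h1
    simp only [h2]
    exact tendsto_const_nhds
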